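/- arXiv:0907.1020 — 4 statements merged into one kernel-verified Lean document; each statement's English description precedes it below -/
import Mathlib

section
/- Under Assumptions 1.1 and 1.2, there exists an event N₀ with P(N₀) = 0 such that on Λ \ N₀: limsup_{n→∞} γ_n^r · max_{n≤k≤a(n,1)} ‖Σ_{i=n}^{k−1} α_i ξ_i‖ ≤ ξ < ∞. -/
/-!
Rewriting `α i ξ i` as `(γ i ^ r)⁻¹ • (S i - S (i - 1))`, where `S` are the weighted partial sums
of Assumption 1.2, Abel summation bounds every unweighted partial sum on the window `[n, a(n,1)]`
by `(γ n ^ r)⁻¹ · max_k ‖S k‖`, because `(γ i ^ r)⁻¹` is nonincreasing and the coefficients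
telescope. Hence `γ n ^ r · ζ'(n) ≤ noise n` for every `n ≥ 1` and every sample, and the limsup
bound follows off the null set where Assumption 1.2 fails.
-/

open MeasureTheory Filter Finset

lemma Set.Finite.le_biSup {ι α : Type*} [ConditionallyCompleteLattice α] {s : Set ι}
    (hs : s.Finite) (f : ι → α) {i : ι} (hi : i ∈ s) : f i ≤ ⨆ k ∈ s, f k :=
  le_ciSup₂ (f := fun k (_ : k ∈ s) => f k)
    ((hs.image f).bddAbove.mono fun x hx => by
      obtain ⟨k, hk, rfl⟩ := by simpa only [Set.mem_iUnion, Set.mem_range] using hx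
      exact ⟨k, hk, rfl⟩) i hi

section AbelSummation

variable {E : Type*} [NormedAddCommGroup E] [NormedSpace ℝ E]

lemma sum_Ico_succ_eq_by_parts (b : ℕ → E) (c : ℕ → ℝ) {n : ℕ} (hc : ∀ i, n ≤ i → c i ≠ 0)
    {k : ℕ} (hk : n ≤ k) :
    ∑ i ∈ Ico n (k + 1), b i =
      ∑ i ∈ Ico n k, ((c i)⁻¹ - (c (i + 1))⁻¹) • ∑ j ∈ Icc n i, c j • b j
        + (c k)⁻¹ • ∑ j ∈ Icc n k, c j • b j := by
  induction k, hk using Nat.le_induction with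
  | base => simp [inv_smul_smul₀ (hc n le_rfl)]
  | succ k hk ih =>
    rw [sum_Ico_succ_top (by omega), ih, sum_Ico_succ_top hk, sum_Icc_succ_top (by omega),
      sub_smul, smul_add, inv_smul_smul₀ (hc (k + 1) (by omega))]
    abel

lemma norm_sum_Ico_le_of_norm_weighted_sum_le (b : ℕ → E) {c : ℕ → ℝ} (hc : Monotone c)
    {n k : ℕ} (hcn : 0 < c n) {M : ℝ} (hM0 : 0 ≤ M)
    (hM : ∀ j ∈ Ico n k, ‖∑ i ∈ Icc n j, c i • b i‖ ≤ M) :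
    ‖∑ i ∈ Ico n k, b i‖ ≤ M / c n := by
  obtain hkn | ⟨m, hnm, rfl⟩ : k ≤ n ∨ ∃ m, n ≤ m ∧ k = m + 1 :=
    (le_or_gt k n).imp_right fun h => ⟨k - 1, by omega, by omega⟩
  · simp [Ico_eq_empty_of_le hkn]
    positivity
  have hpos : ∀ i, n ≤ i → 0 < c i := fun i hi => hcn.trans_le (hc hi)
  have hstep : ∀ i, n ≤ i → 0 ≤ (c i)⁻¹ - (c (i + 1))⁻¹ := fun i hi =>
    sub_nonneg.2 (inv_anti₀ (hpos i hi) (hc i.le_succ))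
  have hM' : ∀ j, n ≤ j → j ≤ m → ‖∑ i ∈ Icc n j, c i • b i‖ ≤ M := fun j hnj hjm =>
    hM j (mem_Ico.2 ⟨hnj, by omega⟩)
  rw [sum_Ico_succ_eq_by_parts b c (fun i hi => (hpos i hi).ne') hnm]
  calc _ ≤ ∑ i ∈ Ico n m, ((c i)⁻¹ - (c (i + 1))⁻¹) * M + (c m)⁻¹ * M := by
        refine (norm_add_le _ _).trans (add_le_add ((norm_sum_le _ _).trans ?_) ?_)
        · refine sum_le_sum fun i hi => ?_
          obtain ⟨hni, him⟩ := mem_Ico.1 hi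
          rw [norm_smul, Real.norm_of_nonneg (hstep i hni)]
          exact mul_le_mul_of_nonneg_left (hM' i hni him.le) (hstep i hni)
        · rw [norm_smul, Real.norm_of_nonneg (inv_nonneg.2 (hpos m hnm).le)]
          exact mul_le_mul_of_nonneg_left (hM' m hnm le_rfl) (inv_nonneg.2 (hpos m hnm).le)
    _ = ((c n)⁻¹ - (c m)⁻¹) * M + (c m)⁻¹ * M := by
        rw [← sum_mul, ← neg_sub, ← sum_Ico_sub (fun i => (c i)⁻¹) hnm, ← sum_neg_distrib]
        simp only [neg_sub]
    _ = M / c n := by ring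

lemma mul_biSup_norm_sum_Ico_le (b : ℕ → E) {c : ℕ → ℝ} (hc : Monotone c) {n : ℕ}
    (hcn : 0 < c n) (m : ℕ) :
    c n * ⨆ k ∈ Set.Icc n m, ‖∑ i ∈ Ico n k, b i‖ ≤
      ⨆ k ∈ Set.Ico n m, ‖∑ i ∈ Icc n k, c i • b i‖ := by
  set W := ⨆ k ∈ Set.Ico n m, ‖∑ i ∈ Icc n k, c i • b i‖
  have hW : 0 ≤ W := Real.iSup_nonneg fun _ => Real.iSup_nonneg fun _ => norm_nonneg _
  rw [← le_div_iff₀' hcn]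
  refine Real.iSup_le (fun k => Real.iSup_le (fun hk => ?_) (by positivity)) (by positivity)
  refine norm_sum_Ico_le_of_norm_weighted_sum_le b hc hcn hW fun j hj => ?_
  exact (Set.finite_Ico n m).le_biSup (fun j => ‖∑ i ∈ Icc n j, c i • b i‖)
    ⟨(mem_Ico.1 hj).1, (mem_Ico.1 hj).2.trans_le hk.2⟩

end AbelSummation

theorem stochastic_gradient_noise_rate_general
    {d : ℕ}
    {Ω : Type} [MeasurableSpace Ω] (P : Measure Ω)
    (α : ℕ → ℝ) (hαpos : ∀ n, 0 < α n)
    (ξ : ℕ → Ω → EuclideanSpace ℝ (Fin d))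
    (γ : ℕ → ℝ) (hγ : ∀ n, γ n = ∑ i ∈ Finset.range n, α i)
    -- the interpolation index `a(n,t)`
    (a : ℕ → ℝ → ℕ)
    -- the event Λ
    (Λ : Set Ω)
    -- Assumption 1.2
    (r : ℝ) (hr : 1 < r)
    (noise : ℕ → Ω → ℝ)
    (hnoise : ∀ n ω, noise n ω =
      ⨆ k ∈ Set.Ico n (a n 1), ‖∑ i ∈ Finset.Icc n k, (α i * γ i ^ r) • ξ i ω‖)
    (hA12 : ∀ᵐ ω ∂P, ω ∈ Λ → IsBoundedUnder (· ≤ ·) atTop (fun n => noise n ω))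
    (Xi : Ω → ℝ) (hXi : ∀ ω, Xi ω = Filter.limsup (fun n => noise n ω) atTop)
    -- `ζ'(n) = max_{n ≤ k ≤ a(n,1)} ‖Σ_{i=n}^{k−1} α_i ξ_i‖`
    (ζmax : ℕ → Ω → ℝ)
    (hζmax : ∀ n ω, ζmax n ω =
      ⨆ k ∈ Set.Icc n (a n 1), ‖∑ i ∈ Finset.Ico n k, α i • ξ i ω‖) :
    ∃ N₀ : Set Ω, MeasurableSet N₀ ∧ P N₀ = 0 ∧
      ∀ ω ∈ Λ \ N₀,
        IsBoundedUnder (· ≤ ·) atTop (fun n => noise n ω) ∧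
        IsBoundedUnder (· ≤ ·) atTop (fun n => γ n ^ r * ζmax n ω) ∧
        Filter.limsup (fun n => γ n ^ r * ζmax n ω) atTop ≤ Xi ω := by
  have hγ_nonneg : ∀ n, 0 ≤ γ n := fun n => (hγ n).symm ▸ sum_nonneg fun i _ => (hαpos i).le
  have hγr_mono : Monotone fun n => γ n ^ r := fun m n hmn => by
    refine Real.rpow_le_rpow (hγ_nonneg m) ?_ (by linarith)
    simpa only [hγ] using sum_le_sum_of_subset_of_nonneg (range_mono hmn)
      fun i _ _ => (hαpos i).le
  have hkey : ∀ ω, ∀ᶠ n in atTop, γ n ^ r * ζmax n ω ≤ noise n ω := fun ω => by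
    filter_upwards [eventually_ge_atTop 1] with n hn
    have hγn : 0 < γ n :=
      (hγ n).symm ▸ sum_pos (fun i _ => hαpos i) (nonempty_range_iff.2 (by omega))
    simpa only [hζmax, hnoise, smul_smul, mul_comm] using
      mul_biSup_norm_sum_Ico_le (fun i => α i • ξ i ω) hγr_mono
        (Real.rpow_pos_of_pos hγn r) (a n 1)
  obtain ⟨N₀, hsub, hN₀, hPN₀⟩ := exists_measurable_superset_of_null (ae_iff.1 hA12)
  refine ⟨N₀, hN₀, hPN₀, fun ω ⟨hωΛ, hωN₀⟩ => ?_⟩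
  have hbdd : IsBoundedUnder (· ≤ ·) atTop (fun n => noise n ω) :=
    not_not.1 (mt (@hsub ω) hωN₀) hωΛ
  have hweighted_nonneg : ∀ n, 0 ≤ γ n ^ r * ζmax n ω := fun n => by
    rw [hζmax]
    exact mul_nonneg (Real.rpow_nonneg (hγ_nonneg n) r)
      (Real.iSup_nonneg fun _ => Real.iSup_nonneg fun _ => norm_nonneg _)
  refine ⟨hbdd, hbdd.mono_le (hkey ω), (hXi ω).symm ▸ ?_⟩
  exact limsup_le_limsup (hkey ω) (isCoboundedUnder_le_of_le atTop hweighted_nonneg) hbdd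

/-- Lemma 1.1 of the paper: under Assumptions 1.1 and 1.2,
there is an event `N₀` of probability zero such that on `Λ \ N₀`:
`limsup_n γ_n^r · max_{n ≤ k ≤ a(n,1)} ‖Σ_{i=n}^{k−1} α_i ξ_i‖ ≤ ξ < ∞`. -/
theorem stochastic_gradient_noise_rate
    {d : ℕ} (hd : 1 ≤ d)
    {Ω : Type} [MeasurableSpace Ω] (P : Measure Ω) [IsProbabilityMeasure P]
    (f : EuclideanSpace ℝ (Fin d) → ℝ)
    (hfd : Differentiable ℝ f)
    (α : ℕ → ℝ) (hαpos : ∀ n, 0 < α n)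
    (θ ξ : ℕ → Ω → EuclideanSpace ℝ (Fin d))
    (hrec : ∀ n ω, θ (n + 1) ω = θ n ω - α n • (gradient f (θ n ω) + ξ n ω))
    -- Assumption 1.1
    (hα0 : Tendsto α atTop (nhds 0))
    (γ : ℕ → ℝ) (hγ : ∀ n, γ n = ∑ i ∈ Finset.range n, α i)
    (hαdiv : Tendsto γ atTop atTop)
    -- the interpolation index `a(n,t)`
    (a : ℕ → ℝ → ℕ)
    (ha : ∀ n t, 0 < t → a n t = sSup {k | n ≤ k ∧ γ k - γ n ≤ t})
    -- the event Λ
    (Λ : Set Ω) (hΛ : Λ = {ω | ∃ C, ∀ n, ‖θ n ω‖ ≤ C})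
    -- Assumption 1.2
    (r : ℝ) (hr : 1 < r)
    (noise : ℕ → Ω → ℝ)
    (hnoise : ∀ n ω, noise n ω =
      ⨆ k ∈ Set.Ico n (a n 1), ‖∑ i ∈ Finset.Icc n k, (α i * γ i ^ r) • ξ i ω‖)
    (hA12 : ∀ᵐ ω ∂P, ω ∈ Λ → IsBoundedUnder (· ≤ ·) atTop (fun n => noise n ω))
    (Xi : Ω → ℝ) (hXi : ∀ ω, Xi ω = Filter.limsup (fun n => noise n ω) atTop)
    -- `ζ'(n) = max_{n ≤ k ≤ a(n,1)} ‖Σ_{i=n}^{k−1} α_i ξ_i‖`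
    (ζmax : ℕ → Ω → ℝ)
    (hζmax : ∀ n ω, ζmax n ω =
      ⨆ k ∈ Set.Icc n (a n 1), ‖∑ i ∈ Finset.Ico n k, α i • ξ i ω‖) :
    ∃ N₀ : Set Ω, MeasurableSet N₀ ∧ P N₀ = 0 ∧
      ∀ ω ∈ Λ \ N₀,
        IsBoundedUnder (· ≤ ·) atTop (fun n => noise n ω) ∧
        IsBoundedUnder (· ≤ ·) atTop (fun n => γ n ^ r * ζmax n ω) ∧
        Filter.limsup (fun n => γ n ^ r * ζmax n ω) atTop ≤ Xi ω :=
  stochastic_gradient_noise_rate_general P α hαpos ξ γ hγ a Λ r hr noise hnoise hA12 Xi hXi ζmax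
    hζmax
end

section
/- Under Assumptions 1.1, 1.2 and 1.3, there exist random variables Ĉ₁ and t̂ with 1 ≤ Ĉ₁ < ∞ and 0 < t̂ < 1 everywhere, and, for every real ε > 0, a finite nonnegative integer-valued random variable τ, such that almost surely on Λ, for all n > τ: (1) max_{n≤k≤a(n,t̂)} ‖θ_k − θ_n‖ ≤ Ĉ₁(‖∇f(θ_n)‖ + γ_n^{−r}(ξ + ε)); (2) max_{n≤k≤a(n,t̂)} (f(θ_k) − f(θ_n)) ≤ Ĉ₁(γ_n^{−r}‖∇f(θ_n)‖(ξ + ε) + γ_n^{−2r}(ξ + ε)²); (3) f(θ_{a(n,t̂)}) − f(θ_n) + (t̂/2)‖∇f(θ_n)‖² ≤ Ĉ₁(γ_n^{−r}‖∇f(θ_n)‖(ξ + ε) + γ_n^{−2r}(ξ + ε)²); (4) 2(f(θ_{a(n,t̂)}) − f(θ_n)) + (t̂/2)‖∇f(θ_n)‖² + ‖∇f(θ_n)‖·‖θ_{a(n,t̂)} − θ_n‖ ≤ Ĉ₁(γ_n^{−r}‖∇f(θ_n)‖(ξ + ε) + γ_n^{−2r}(ξ + ε)²). -/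
/-!
Everything happens pathwise on `Λ`, where the iterates stay in a closed ball on which `∇f` is
`K`-Lipschitz. Fix a window `[n, a(n,t)]` with `t = 1/(64(1+K))`. Summation by parts against the
decreasing weights `γ_i^{-r}` bounds every partial noise sum in the window by
`γ_n^{-r}(ξ + ε)` once `n` is large, and a Grönwall argument over the short window keeps the
iterates within `2(t‖∇f(θ_n)‖ + γ_n^{-r}(ξ + ε))` of `θ_n`. So the gradient barely moves, whence
`θ_k - θ_n ≈ -(γ_k - γ_n) ∇f(θ_n)`, and the quadratic upper bound for functions with Lipschitz
gradient turns this into a decrease of `f` by about `(γ_k - γ_n)‖∇f(θ_n)‖²`. Since `α_n → 0`, the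
window has length at least `31t/32`, which yields (3) and (4).
-/

open MeasureTheory Filter Topology NNReal
open Finset Metric RealInnerProductSpace InnerProductSpace

theorem le_biSup_of_finite {ι : Type*} {F : ι → ℝ} {S : Set ι} (hS : S.Finite) {j : ι}
    (hj : j ∈ S) : F j ≤ ⨆ i ∈ S, F i := by
  obtain ⟨b, hb⟩ := (hS.image F).bddAbove
  refine le_ciSup_of_le ⟨max b 0, ?_⟩ j (ciSup_pos (f := fun _ => F j) hj).ge
  rintro _ ⟨i, rfl⟩
  exact Real.iSup_le (fun hi => (hb ⟨i, hi, rfl⟩).trans (le_max_left _ _)) (le_max_right _ _)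

theorem exists_imp_of_imp_exists {ι : Type*} [Nonempty ι] {p : Prop} {q : ι → Prop}
    (h : p → ∃ i, q i) : ∃ i, p → q i := by
  by_cases hp : p
  · obtain ⟨i, hi⟩ := h hp
    exact ⟨i, fun _ => hi⟩
  · exact ⟨Classical.arbitrary ι, fun h' => absurd h' hp⟩

theorem norm_sum_Ico_smul_le_of_antitoneOn {E : Type*} [SeminormedAddCommGroup E]
    [NormedSpace ℝ E] {b : ℕ → ℝ} {v : ℕ → E} {n m : ℕ} {M : ℝ} (hnm : n ≤ m)
    (hb : AntitoneOn b (Set.Icc n m)) (hbm : 0 ≤ b m)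
    (hv : ∀ k, n ≤ k → k ≤ m → ‖∑ i ∈ Ico n k, v i‖ ≤ M) :
    ‖∑ i ∈ Ico n m, b i • v i‖ ≤ M * b n := by
  have by_parts : ∀ k, n ≤ k → k ≤ m →
      ‖∑ i ∈ Ico n k, b i • v i - b k • ∑ i ∈ Ico n k, v i‖ ≤ M * (b n - b k) := by
    intro k hnk
    induction k, hnk using Nat.le_induction with
    | base => simp
    | succ k hnk ih =>
      intro hkm
      have hbk : 0 ≤ b k - b (k + 1) :=
        sub_nonneg.2 (hb ⟨hnk, by omega⟩ ⟨by omega, hkm⟩ (by omega))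
      have hsplit : ∑ i ∈ Ico n (k + 1), b i • v i - b (k + 1) • ∑ i ∈ Ico n (k + 1), v i =
          (∑ i ∈ Ico n k, b i • v i - b k • ∑ i ∈ Ico n k, v i) +
            (b k - b (k + 1)) • ∑ i ∈ Ico n (k + 1), v i := by
        rw [sum_Ico_succ_top hnk, sum_Ico_succ_top hnk]
        module
      calc _ ≤ M * (b n - b k) + (b k - b (k + 1)) * M := by
            rw [hsplit]
            refine (norm_add_le _ _).trans (add_le_add (ih (by omega)) ?_)
            rw [norm_smul, Real.norm_of_nonneg hbk]
            exact mul_le_mul_of_nonneg_left (hv _ (by omega) hkm) hbk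
        _ = M * (b n - b (k + 1)) := by ring
  calc ‖∑ i ∈ Ico n m, b i • v i‖
      ≤ ‖b m • ∑ i ∈ Ico n m, v i‖ + ‖∑ i ∈ Ico n m, b i • v i - b m • ∑ i ∈ Ico n m, v i‖ :=
        norm_le_norm_add_norm_sub' _ _
    _ ≤ b m * M + M * (b n - b m) := by
        rw [norm_smul, Real.norm_of_nonneg hbm]
        exact add_le_add (mul_le_mul_of_nonneg_left (hv m hnm le_rfl) hbm)
          (by_parts m hnm le_rfl)
    _ = M * b n := by ring

theorem norm_sum_Ico_smul_le_rpow_neg_mul {E : Type*} [SeminormedAddCommGroup E]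
    [NormedSpace ℝ E] {α γ : ℕ → ℝ} {u : ℕ → E} {n m k : ℕ} {r M : ℝ} (hγ : Monotone γ)
    (hγn : 0 < γ n) (hr : 0 ≤ r)
    (hM : ⨆ j ∈ Set.Ico n m, ‖∑ i ∈ Icc n j, (α i * γ i ^ r) • u i‖ ≤ M)
    (hnk : n ≤ k) (hkm : k ≤ m) :
    ‖∑ i ∈ Ico n k, α i • u i‖ ≤ γ n ^ (-r) * M := by
  have hM0 : 0 ≤ M :=
    (Real.iSup_nonneg fun _ => Real.iSup_nonneg fun _ => norm_nonneg _).trans hM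
  have hγpos : ∀ i, n ≤ i → 0 < γ i := fun i hi => hγn.trans_le (hγ hi)
  have hrw : ∑ i ∈ Ico n k, α i • u i = ∑ i ∈ Ico n k, γ i ^ (-r) • (α i * γ i ^ r) • u i := by
    refine sum_congr rfl fun i hi => ?_
    have hi := hγpos i (mem_Ico.1 hi).1
    rw [smul_smul, Real.rpow_neg hi.le, mul_comm, mul_assoc,
      mul_inv_cancel₀ (Real.rpow_pos_of_pos hi r).ne', mul_one]
  rw [hrw, mul_comm]
  refine norm_sum_Ico_smul_le_of_antitoneOn hnk
    (fun i hi j _ hij => Real.rpow_le_rpow_of_nonpos (hγpos i hi.1) (hγ hij) (neg_nonpos.2 hr))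
    (Real.rpow_nonneg (hγpos k hnk).le _) fun j hnj hjk => ?_
  rcases hnj.eq_or_lt with rfl | hlt
  · simpa using hM0
  · obtain ⟨j, rfl⟩ := Nat.exists_eq_add_one_of_ne_zero (by omega : j ≠ 0)
    rw [Ico_add_one_right_eq_Icc]
    exact (le_biSup_of_finite (Set.finite_Ico n m) ⟨by omega, by omega⟩).trans hM

theorem le_two_mul_of_le_add_mul_sum {α Δ : ℕ → ℝ} {n m : ℕ} {A L : ℝ} (hα : ∀ i, 0 ≤ α i)
    (hA : 0 ≤ A) (hL : 0 ≤ L) (hsmall : 2 * L * ∑ i ∈ Ico n m, α i ≤ 1)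
    (hΔ : ∀ k, n ≤ k → k ≤ m → Δ k ≤ A + L * ∑ i ∈ Ico n k, α i * Δ i) :
    ∀ k, n ≤ k → k ≤ m → Δ k ≤ 2 * A := by
  intro k
  induction k using Nat.strong_induction_on with
  | _ k ih =>
    intro hnk hkm
    have hsum : ∑ i ∈ Ico n k, α i * Δ i ≤ 2 * A * ∑ i ∈ Ico n m, α i :=
      calc ∑ i ∈ Ico n k, α i * Δ i ≤ ∑ i ∈ Ico n k, α i * (2 * A) := by
            refine sum_le_sum fun i hi => ?_
            rw [mem_Ico] at hi
            exact mul_le_mul_of_nonneg_left (ih i hi.2 hi.1 (by omega)) (hα i)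
        _ = 2 * A * ∑ i ∈ Ico n k, α i := by rw [← sum_mul, mul_comm]
        _ ≤ 2 * A * ∑ i ∈ Ico n m, α i := by
            gcongr
            exact fun i _ _ => hα i
    nlinarith [hΔ k hnk hkm, mul_le_mul_of_nonneg_left hsum hL]

theorem interpIndex_spec {γ : ℕ → ℝ} {a : ℕ → ℝ → ℕ} (hγ : Tendsto γ atTop atTop)
    (ha : ∀ n t, 0 < t → a n t = sSup {k | n ≤ k ∧ γ k - γ n ≤ t}) {n : ℕ} {t : ℝ}
    (ht : 0 < t) :
    n ≤ a n t ∧ γ (a n t) - γ n ≤ t ∧ t < γ (a n t + 1) - γ n ∧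
      ∀ k, n ≤ k → γ k - γ n ≤ t → k ≤ a n t := by
  have hbdd : BddAbove {k | n ≤ k ∧ γ k - γ n ≤ t} := by
    obtain ⟨N, hN⟩ := (hγ.eventually_gt_atTop (γ n + t)).exists_forall_of_atTop
    exact ⟨N, fun k hk => not_lt.1 fun hNk => by linarith [hN k hNk.le, hk.2]⟩
  have hmem := Nat.sSup_mem
    (⟨n, le_rfl, by simpa using ht.le⟩ : {k | n ≤ k ∧ γ k - γ n ≤ t}.Nonempty) hbdd
  have hmax : ∀ k, n ≤ k → γ k - γ n ≤ t → k ≤ a n t := fun k hnk hk => by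
    rw [ha n t ht]
    exact le_csSup hbdd ⟨hnk, hk⟩
  rw [← ha n t ht] at hmem
  obtain ⟨hn, hle⟩ := hmem
  exact ⟨hn, hle, lt_of_not_ge fun h => by have := hmax _ (by omega) h; omega, hmax⟩

section Window

variable {E : Type*} [NormedAddCommGroup E] [InnerProductSpace ℝ E] [CompleteSpace E]
  {f : E → ℝ} {s : Set E} {K : ℝ≥0} {α : ℕ → ℝ} {x u : ℕ → E} {n m k : ℕ} {t A : ℝ}

theorem LipschitzOnWith.le_add_inner_gradient_add_mul_sq (hf : Differentiable ℝ f)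
    (hK : LipschitzOnWith K (gradient f) s) (hs : Convex ℝ s) {x y : E} (hx : x ∈ s)
    (hy : y ∈ s) : f y ≤ f x + ⟪gradient f x, y - x⟫ + K * ‖y - x‖ ^ 2 := by
  set h : E → ℝ := f - toDual ℝ E (gradient f x)
  have hderiv : ∀ z, HasFDerivAt h (toDual ℝ E (gradient f z - gradient f x)) z := by
    intro z
    have hfz := hasGradientAt_iff_hasFDerivAt.1 (hf z).hasGradientAt
    rw [map_sub]
    exact hfz.sub (toDual ℝ E (gradient f x)).hasFDerivAt
  have hbound : ∀ z ∈ segment ℝ x y,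
      ‖toDual ℝ E (gradient f z - gradient f x)‖ ≤ K * ‖y - x‖ := by
    intro z hz
    rw [LinearIsometryEquiv.norm_map]
    calc _ ≤ K * ‖z - x‖ := hK.norm_sub_le (hs.segment_subset hx hy hz) hx
      _ ≤ K * ‖y - x‖ := by gcongr; exact norm_sub_le_of_mem_segment hz
  have hmvt := (convex_segment x y).norm_image_sub_le_of_norm_hasFDerivWithin_le
    (fun z _ => (hderiv z).hasFDerivWithinAt) hbound (left_mem_segment ℝ x y)
    (right_mem_segment ℝ x y)
  have hh : h y - h x = f y - f x - ⟪gradient f x, y - x⟫ := by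
    simp only [h, Pi.sub_apply, toDual_apply_apply, inner_sub_right]; ring
  rw [hh] at hmvt
  nlinarith [le_abs_self (f y - f x - ⟪gradient f x, y - x⟫), Real.norm_eq_abs
    (f y - f x - ⟪gradient f x, y - x⟫)]

theorem sub_add_sum_smul_gradient_eq
    (hrec : ∀ i, x (i + 1) = x i - α i • (gradient f (x i) + u i)) (hnk : n ≤ k) :
    x k - x n + (∑ i ∈ Ico n k, α i) • gradient f (x n) =
      -∑ i ∈ Ico n k, α i • (gradient f (x i) - gradient f (x n)) - ∑ i ∈ Ico n k, α i • u i := by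
  induction k, hnk using Nat.le_induction with
  | base => simp
  | succ k hnk ih =>
    rw [sum_Ico_succ_top hnk, sum_Ico_succ_top hnk, sum_Ico_succ_top hnk, hrec k]
    linear_combination (norm := module) ih

theorem norm_sub_add_sum_smul_gradient_le
    (hrec : ∀ i, x (i + 1) = x i - α i • (gradient f (x i) + u i))
    (hK : LipschitzOnWith K (gradient f) s) (hx : ∀ i, x i ∈ s) (hα : ∀ i, 0 ≤ α i)
    (hnk : n ≤ k) :
    ‖x k - x n + (∑ i ∈ Ico n k, α i) • gradient f (x n)‖ ≤
      ‖∑ i ∈ Ico n k, α i • u i‖ + K * ∑ i ∈ Ico n k, α i * ‖x i - x n‖ := by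
  rw [sub_add_sum_smul_gradient_eq hrec hnk, add_comm]
  refine (norm_sub_le _ _).trans (add_le_add_left ?_ _)
  rw [norm_neg, mul_sum]
  refine (norm_sum_le _ _).trans (sum_le_sum fun i _ => ?_)
  rw [norm_smul, Real.norm_of_nonneg (hα i), mul_left_comm]
  exact mul_le_mul_of_nonneg_left (hK.norm_sub_le (hx i) (hx n)) (hα i)

theorem norm_sub_le_two_mul_of_window
    (hrec : ∀ i, x (i + 1) = x i - α i • (gradient f (x i) + u i))
    (hK : LipschitzOnWith K (gradient f) s) (hx : ∀ i, x i ∈ s) (hα : ∀ i, 0 ≤ α i)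
    (ht : ∑ i ∈ Ico n m, α i ≤ t) (hKt : 2 * K * t ≤ 1)
    (hu : ∀ k, n ≤ k → k ≤ m → ‖∑ i ∈ Ico n k, α i • u i‖ ≤ A) :
    ∀ k, n ≤ k → k ≤ m → ‖x k - x n‖ ≤ 2 * (t * ‖gradient f (x n)‖ + A) := by
  intro k hnk hkm
  have hα_Ico : ∀ j, j ≤ m → ∑ i ∈ Ico n j, α i ≤ t := fun j hj =>
    (sum_le_sum_of_subset_of_nonneg (Ico_subset_Ico_right hj) fun i _ _ => hα i).trans ht
  have ht0 : 0 ≤ t := (sum_nonneg fun i _ => hα i).trans ht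
  have hA : 0 ≤ A := by simpa using hu n le_rfl (hnk.trans hkm)
  refine le_two_mul_of_le_add_mul_sum (Δ := fun j => ‖x j - x n‖)
    (A := t * ‖gradient f (x n)‖ + A) hα (by positivity) K.coe_nonneg
    ((mul_le_mul_of_nonneg_left ht (by positivity : (0 : ℝ) ≤ 2 * K)).trans hKt)
    (fun j hnj hjm => ?_) k hnk hkm
  set β := ∑ i ∈ Ico n j, α i
  have hΔ := norm_sub_le (x j - x n + β • gradient f (x n)) (β • gradient f (x n))
  rw [add_sub_cancel_right, norm_smul, Real.norm_of_nonneg (sum_nonneg fun i _ => hα i)] at hΔ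
  calc ‖x j - x n‖ ≤ ‖x j - x n + β • gradient f (x n)‖ + β * ‖gradient f (x n)‖ := hΔ
    _ ≤ A + K * ∑ i ∈ Ico n j, α i * ‖x i - x n‖ + t * ‖gradient f (x n)‖ := by
        gcongr
        · exact (norm_sub_add_sum_smul_gradient_le hrec hK hx hα hnj).trans
            (add_le_add_left (hu j hnj hjm) _)
        · exact hα_Ico j hjm
    _ = _ := by ring

theorem window_estimates (hf : Differentiable ℝ f) (hs : Convex ℝ s)
    (hrec : ∀ i, x (i + 1) = x i - α i • (gradient f (x i) + u i))
    (hK : LipschitzOnWith K (gradient f) s) (hx : ∀ i, x i ∈ s) (hα : ∀ i, 0 ≤ α i)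
    (ht : ∑ i ∈ Ico n m, α i ≤ t) (hKt : 64 * K * t ≤ 1)
    (hu : ∀ k, n ≤ k → k ≤ m → ‖∑ i ∈ Ico n k, α i • u i‖ ≤ A) (hnk : n ≤ k) (hkm : k ≤ m) :
    ‖x k - x n‖ ≤ 2 * (t * ‖gradient f (x n)‖ + A) ∧
      ‖x k - x n‖ ≤ 33 / 32 * ((∑ i ∈ Ico n k, α i) * ‖gradient f (x n)‖ + A) ∧
      f (x k) - f (x n) ≤ -(9 / 10) * (∑ i ∈ Ico n k, α i) * ‖gradient f (x n)‖ ^ 2 +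
        33 / 32 * A * ‖gradient f (x n)‖ + 3 * K * A ^ 2 := by
  set β := ∑ i ∈ Ico n k, α i
  set g := gradient f (x n)
  set e := x k - x n + β • g
  have hβ : 0 ≤ β := sum_nonneg fun i _ => hα i
  have hβt : β ≤ t :=
    (sum_le_sum_of_subset_of_nonneg (Ico_subset_Ico_right hkm) fun i _ _ => hα i).trans ht
  have hA : 0 ≤ A := by simpa using hu n le_rfl (hnk.trans hkm)
  have hK0 := K.coe_nonneg
  have hKβ : K * β ≤ 1 / 64 := by nlinarith
  have hapriori := norm_sub_le_two_mul_of_window hrec hK hx hα ht (by nlinarith) hu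
  have he : ‖e‖ ≤ 33 / 32 * A + β * ‖g‖ / 32 := by
    have hsum : ∑ i ∈ Ico n k, α i * ‖x i - x n‖ ≤ β * (2 * (t * ‖g‖ + A)) := by
      rw [sum_mul]
      refine sum_le_sum fun i hi => ?_
      rw [mem_Ico] at hi
      exact mul_le_mul_of_nonneg_left (hapriori i hi.1 (by omega)) (hα i)
    have := (norm_sub_add_sum_smul_gradient_le hrec hK hx hα hnk).trans
      (add_le_add (hu k hnk hkm) (mul_le_mul_of_nonneg_left hsum hK0))
    nlinarith [mul_nonneg hβ (norm_nonneg g)]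
  have hdecomp : x k - x n = e - β • g := by simp [e]
  have hΔ : ‖x k - x n‖ ≤ 33 / 32 * (β * ‖g‖ + A) := by
    have := norm_sub_le e (β • g)
    rw [← hdecomp, norm_smul, Real.norm_of_nonneg hβ] at this
    nlinarith [mul_nonneg hβ (norm_nonneg g)]
  have hinner : ⟪g, x k - x n⟫ ≤ -(β * ‖g‖ ^ 2) + ‖g‖ * ‖e‖ := by
    rw [hdecomp, inner_sub_right, real_inner_smul_right, real_inner_self_eq_norm_sq]
    linarith [real_inner_le_norm g e]
  have hdesc := hK.le_add_inner_gradient_add_mul_sq hf hs (hx n) (hx k)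
  refine ⟨hapriori k hnk hkm, hΔ, ?_⟩
  have hΔsq : ‖x k - x n‖ ^ 2 ≤ (33 / 32) ^ 2 * (2 * ((β * ‖g‖) ^ 2 + A ^ 2)) := by
    nlinarith [sq_nonneg (β * ‖g‖ - A), norm_nonneg (x k - x n), mul_nonneg hβ (norm_nonneg g)]
  have hKβG : K * (β * ‖g‖) ^ 2 ≤ β * ‖g‖ ^ 2 / 64 := by
    have := mul_le_mul_of_nonneg_right hKβ (mul_nonneg hβ (sq_nonneg ‖g‖))
    nlinarith
  have hge := mul_le_mul_of_nonneg_left he (norm_nonneg g)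
  nlinarith [mul_le_mul_of_nonneg_left hΔsq hK0, mul_nonneg hK0 (sq_nonneg A)]

end Window

theorem local_estimates_of_window_bounds {K t G A : ℝ} {β Δ F : ℕ → ℝ} {n m : ℕ} (hK : 0 ≤ K)
    (ht : t ≤ 1) (hG : 0 ≤ G) (hA : 0 ≤ A) (hnm : n ≤ m) (hβ : ∀ k, n ≤ k → 0 ≤ β k)
    (hβm : 31 / 32 * t ≤ β m)
    (hw : ∀ k, n ≤ k → k ≤ m → Δ k ≤ 2 * (t * G + A) ∧ Δ k ≤ 33 / 32 * (β k * G + A) ∧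
      F k ≤ -(9 / 10) * β k * G ^ 2 + 33 / 32 * A * G + 3 * K * A ^ 2) :
    (∀ k, n ≤ k → k ≤ m → Δ k ≤ (4 + 6 * K) * (G + A)) ∧
      (∀ k, n ≤ k → k ≤ m → F k ≤ (4 + 6 * K) * (A * G + A ^ 2)) ∧
      F m + t * G ^ 2 / 2 ≤ (4 + 6 * K) * (A * G + A ^ 2) ∧
      2 * F m + t * G ^ 2 / 2 + G * Δ m ≤ (4 + 6 * K) * (A * G + A ^ 2) := by
  have hAG := mul_nonneg hA hG
  have hKA := mul_nonneg hK (sq_nonneg A)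
  refine ⟨fun k hnk hkm => ?_, fun k hnk hkm => ?_, ?_⟩
  · nlinarith [(hw k hnk hkm).1, mul_nonneg hK hG, mul_nonneg hK hA]
  · nlinarith [(hw k hnk hkm).2.2, mul_nonneg (hβ k hnk) (sq_nonneg G), mul_nonneg hK hAG]
  obtain ⟨-, hΔ, hF⟩ := hw m hnm le_rfl
  have htβ : t * G ^ 2 ≤ 32 / 31 * β m * G ^ 2 := by nlinarith [sq_nonneg G]
  have hβG : 0 ≤ β m * G ^ 2 := mul_nonneg (hβ m hnm) (sq_nonneg G)
  have hGΔ := mul_le_mul_of_nonneg_left hΔ hG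
  constructor <;> nlinarith [mul_nonneg hK hAG, sq_nonneg A]

/-- Estimates (1)–(4) at time `n`, with `Ξ` in the role of `ξ + ε`. -/
def LocalEstimates {E : Type*} [NormedAddCommGroup E] [InnerProductSpace ℝ E] [CompleteSpace E]
    (f : E → ℝ) (x : ℕ → E) (γ : ℕ → ℝ) (a : ℕ → ℝ → ℕ) (r Ξ C t : ℝ) (n : ℕ) : Prop :=
  (∀ k, n ≤ k → k ≤ a n t →
    ‖x k - x n‖ ≤ C * (‖gradient f (x n)‖ + γ n ^ (-r) * Ξ)) ∧
  (∀ k, n ≤ k → k ≤ a n t →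
    f (x k) - f (x n) ≤
      C * (γ n ^ (-r) * ‖gradient f (x n)‖ * Ξ + γ n ^ (-(2 * r)) * Ξ ^ 2)) ∧
  (f (x (a n t)) - f (x n) + t * ‖gradient f (x n)‖ ^ 2 / 2 ≤
    C * (γ n ^ (-r) * ‖gradient f (x n)‖ * Ξ + γ n ^ (-(2 * r)) * Ξ ^ 2)) ∧
  (2 * (f (x (a n t)) - f (x n)) + t * ‖gradient f (x n)‖ ^ 2 / 2 +
      ‖gradient f (x n)‖ * ‖x (a n t) - x n‖ ≤
    C * (γ n ^ (-r) * ‖gradient f (x n)‖ * Ξ + γ n ^ (-(2 * r)) * Ξ ^ 2))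

theorem exists_eventually_localEstimates {E : Type*} [NormedAddCommGroup E]
    [InnerProductSpace ℝ E] [ProperSpace E] {f : E → ℝ} (hf : Differentiable ℝ f)
    (hlip : LocallyLipschitz (gradient f)) {α γ : ℕ → ℝ} (hα : ∀ n, 0 ≤ α n)
    (hα0 : Tendsto α atTop (𝓝 0)) (hγ : ∀ n, γ n = ∑ i ∈ range n, α i)
    (hγ_top : Tendsto γ atTop atTop) {a : ℕ → ℝ → ℕ}
    (ha : ∀ n t, 0 < t → a n t = sSup {k | n ≤ k ∧ γ k - γ n ≤ t}) {x u : ℕ → E}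
    (hrec : ∀ n, x (n + 1) = x n - α n • (gradient f (x n) + u n)) {B : ℝ}
    (hB : ∀ n, ‖x n‖ ≤ B) {r : ℝ} (hr : 0 ≤ r) {noise : ℕ → ℝ}
    (hnoise : ∀ n, noise n =
      ⨆ k ∈ Set.Ico n (a n 1), ‖∑ i ∈ Icc n k, (α i * γ i ^ r) • u i‖)
    (hbdd : IsBoundedUnder (· ≤ ·) atTop noise) :
    ∃ K : ℝ≥0, ∀ ε, 0 < ε → ∀ᶠ n in atTop, LocalEstimates f x γ a r
      (limsup noise atTop + ε) (4 + 6 * K) (1 / (64 * (1 + K))) n := by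
  obtain ⟨K, hK⟩ := (hlip.locallyLipschitzOn (s := closedBall 0 B))
    |>.exists_lipschitzOnWith_of_compact (isCompact_closedBall 0 B)
  have hx : ∀ i, x i ∈ closedBall (0 : E) B := fun i => mem_closedBall_zero_iff.2 (hB i)
  have hK0 := K.coe_nonneg
  set t : ℝ := 1 / (64 * (1 + K))
  have ht0 : 0 < t := by positivity
  have ht1 : t < 1 := by rw [div_lt_one (by positivity)]; linarith
  have hKt : 64 * K * t ≤ 1 := by rw [mul_one_div, div_le_one (by positivity)]; linarith
  refine ⟨K, fun ε hε => ?_⟩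
  have hγ_sub : ∀ {i j}, i ≤ j → γ j - γ i = ∑ k ∈ Ico i j, α k := fun hij => by
    rw [hγ, hγ, sum_Ico_eq_sub _ hij]
  have hγ_mono : Monotone γ := fun i j hij =>
    sub_nonneg.1 ((hγ_sub hij).symm ▸ sum_nonneg fun k _ => hα k)
  filter_upwards [eventually_lt_of_limsup_lt (lt_add_of_pos_right _ hε) hbdd,
    eventually_forall_ge_atTop.2 (hα0.eventually_lt_const (by positivity : 0 < t / 32)),
    hγ_top.eventually_gt_atTop 0] with n hnoise_lt hα_small hγn
  set Ξ := limsup noise atTop + ε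
  obtain ⟨hnm, hm_le, hm_succ, -⟩ := interpIndex_spec hγ_top ha ht0 (n := n)
  set m := a n t
  have hm1 : m ≤ a n 1 := (interpIndex_spec hγ_top ha one_pos).2.2.2 m hnm (hm_le.trans ht1.le)
  have hβm : 31 / 32 * t ≤ γ m - γ n := by
    have hstep : γ (m + 1) = γ m + α m := by rw [hγ, hγ, sum_range_succ]
    linarith [hα_small m hnm]
  have hu : ∀ k, n ≤ k → k ≤ m → ‖∑ i ∈ Ico n k, α i • u i‖ ≤ γ n ^ (-r) * Ξ :=
    fun k hnk hkm => norm_sum_Ico_smul_le_rpow_neg_mul hγ_mono hγn hr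
      ((hnoise n) ▸ hnoise_lt.le) hnk (hkm.trans hm1)
  have htime : ∑ i ∈ Ico n m, α i ≤ t := by rw [← hγ_sub hnm]; exact hm_le
  have hwin := fun k => window_estimates (k := k) hf (convex_closedBall 0 B) hrec hK hx hα
    htime hKt hu
  have hA : 0 ≤ γ n ^ (-r) * Ξ := by simpa using hu n le_rfl hnm
  have hrhs : γ n ^ (-r) * ‖gradient f (x n)‖ * Ξ + γ n ^ (-(2 * r)) * Ξ ^ 2 =
      γ n ^ (-r) * Ξ * ‖gradient f (x n)‖ + (γ n ^ (-r) * Ξ) ^ 2 := by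
    rw [show -(2 * r) = -r + -r by ring, Real.rpow_add hγn]
    ring
  rw [LocalEstimates, hrhs]
  exact local_estimates_of_window_bounds (β := fun k => γ k - γ n)
    (Δ := fun k => ‖x k - x n‖) (F := fun k => f (x k) - f (x n)) hK0 ht1.le (norm_nonneg _) hA
    hnm (fun k hk => sub_nonneg.2 (hγ_mono hk)) hβm
    fun k hnk hkm => by rw [hγ_sub hnk]; exact hwin k hnk hkm

theorem stochastic_gradient_local_estimates_general
    {d : ℕ}
    {Ω : Type} [MeasurableSpace Ω] (P : Measure Ω)
    (f : EuclideanSpace ℝ (Fin d) → ℝ)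
    (hfd : Differentiable ℝ f)
    (hlip : LocallyLipschitz (fun x => gradient f x))
    (α : ℕ → ℝ) (hαpos : ∀ n, 0 < α n)
    (θ ξ : ℕ → Ω → EuclideanSpace ℝ (Fin d))
    (hrec : ∀ n ω, θ (n + 1) ω = θ n ω - α n • (gradient f (θ n ω) + ξ n ω))
    -- Assumption 1.1
    (hα0 : Tendsto α atTop (nhds 0))
    (γ : ℕ → ℝ) (hγ : ∀ n, γ n = ∑ i ∈ Finset.range n, α i)
    (hαdiv : Tendsto γ atTop atTop)
    -- the interpolation index `a(n,t)`
    (a : ℕ → ℝ → ℕ)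
    (ha : ∀ n t, 0 < t → a n t = sSup {k | n ≤ k ∧ γ k - γ n ≤ t})
    -- the event Λ
    (Λ : Set Ω) (hΛ : Λ = {ω | ∃ C, ∀ n, ‖θ n ω‖ ≤ C})
    -- Assumption 1.2
    (r : ℝ) (hr : 1 < r)
    (noise : ℕ → Ω → ℝ)
    (hnoise : ∀ n ω, noise n ω =
      ⨆ k ∈ Set.Ico n (a n 1), ‖∑ i ∈ Finset.Icc n k, (α i * γ i ^ r) • ξ i ω‖)
    (hA12 : ∀ᵐ ω ∂P, ω ∈ Λ → IsBoundedUnder (· ≤ ·) atTop (fun n => noise n ω))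
    (Xi : Ω → ℝ) (hXi : ∀ ω, Xi ω = Filter.limsup (fun n => noise n ω) atTop) :
    ∃ C₁ that : Ω → ℝ, (∀ ω, 1 ≤ C₁ ω) ∧ (∀ ω, 0 < that ω ∧ that ω < 1) ∧
      ∀ ε : ℝ, 0 < ε → ∃ τ : Ω → ℕ,
        ∀ᵐ ω ∂P, ω ∈ Λ → ∀ n, τ ω < n →
          (∀ k, n ≤ k → k ≤ a n (that ω) →
            ‖θ k ω - θ n ω‖ ≤
              C₁ ω * (‖gradient f (θ n ω)‖ + γ n ^ (-r) * (Xi ω + ε))) ∧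
          (∀ k, n ≤ k → k ≤ a n (that ω) →
            f (θ k ω) - f (θ n ω) ≤
              C₁ ω * (γ n ^ (-r) * ‖gradient f (θ n ω)‖ * (Xi ω + ε) +
                γ n ^ (-(2 * r)) * (Xi ω + ε) ^ 2)) ∧
          (f (θ (a n (that ω)) ω) - f (θ n ω) +
              that ω * ‖gradient f (θ n ω)‖ ^ 2 / 2 ≤
            C₁ ω * (γ n ^ (-r) * ‖gradient f (θ n ω)‖ * (Xi ω + ε) +
              γ n ^ (-(2 * r)) * (Xi ω + ε) ^ 2)) ∧
          (2 * (f (θ (a n (that ω)) ω) - f (θ n ω)) +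
              that ω * ‖gradient f (θ n ω)‖ ^ 2 / 2 +
              ‖gradient f (θ n ω)‖ * ‖θ (a n (that ω)) ω - θ n ω‖ ≤
            C₁ ω * (γ n ^ (-r) * ‖gradient f (θ n ω)‖ * (Xi ω + ε) +
              γ n ^ (-(2 * r)) * (Xi ω + ε) ^ 2)) := by
  obtain rfl : Xi = fun ω => limsup (fun n => noise n ω) atTop := funext hXi
  choose K hK using fun ω => exists_imp_of_imp_exists
    fun h : ω ∈ Λ ∧ IsBoundedUnder (· ≤ ·) atTop (fun n => noise n ω) => by
      obtain ⟨⟨B, hB⟩, hbdd⟩ := hΛ ▸ h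
      exact exists_eventually_localEstimates hfd hlip (fun n => (hαpos n).le) hα0 hγ hαdiv ha
        (fun n => hrec n ω) hB (by linarith) (fun n => hnoise n ω) hbdd
  refine ⟨fun ω => 4 + 6 * K ω, fun ω => 1 / (64 * (1 + K ω)), fun ω => ?_, fun ω => ?_,
    fun ε hε => ?_⟩
  · linarith [(K ω).coe_nonneg]
  · have hK0 := (K ω).coe_nonneg
    exact ⟨by positivity, by rw [div_lt_one (by positivity)]; linarith⟩
  choose τ hτ using fun ω => exists_imp_of_imp_exists
    fun h => (hK ω h ε hε).exists_forall_of_atTop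
  refine ⟨τ, ?_⟩
  filter_upwards [hA12] with ω hbdd hω n hn
  exact hτ ω ⟨hω, hbdd hω⟩ n hn.le

/-- Lemma 1.2 of the paper: under Assumptions 1.1, 1.2, 1.3
there are random variables `Ĉ₁ ∈ [1,∞)` and `t̂ ∈ (0,1)` and, for every `ε > 0`,
a finite nonnegative integer-valued random variable `τ` such that almost surely
on `Λ`, for all `n > τ`, estimates (1)–(4) hold. -/
theorem stochastic_gradient_local_estimates
    {d : ℕ} (hd : 1 ≤ d)
    {Ω : Type} [MeasurableSpace Ω] (P : Measure Ω) [IsProbabilityMeasure P]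
    (f : EuclideanSpace ℝ (Fin d) → ℝ)
    (hfd : Differentiable ℝ f)
    (hlip : LocallyLipschitz (fun x => gradient f x))
    (α : ℕ → ℝ) (hαpos : ∀ n, 0 < α n)
    (θ ξ : ℕ → Ω → EuclideanSpace ℝ (Fin d))
    (hrec : ∀ n ω, θ (n + 1) ω = θ n ω - α n • (gradient f (θ n ω) + ξ n ω))
    -- Assumption 1.1
    (hα0 : Tendsto α atTop (nhds 0))
    (γ : ℕ → ℝ) (hγ : ∀ n, γ n = ∑ i ∈ Finset.range n, α i)
    (hαdiv : Tendsto γ atTop atTop)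
    -- the interpolation index `a(n,t)`
    (a : ℕ → ℝ → ℕ)
    (ha : ∀ n t, 0 < t → a n t = sSup {k | n ≤ k ∧ γ k - γ n ≤ t})
    -- the event Λ
    (Λ : Set Ω) (hΛ : Λ = {ω | ∃ C, ∀ n, ‖θ n ω‖ ≤ C})
    -- Assumption 1.2
    (r : ℝ) (hr : 1 < r)
    (noise : ℕ → Ω → ℝ)
    (hnoise : ∀ n ω, noise n ω =
      ⨆ k ∈ Set.Ico n (a n 1), ‖∑ i ∈ Finset.Icc n k, (α i * γ i ^ r) • ξ i ω‖)
    (hA12 : ∀ᵐ ω ∂P, ω ∈ Λ → IsBoundedUnder (· ≤ ·) atTop (fun n => noise n ω))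
    (Xi : Ω → ℝ) (hXi : ∀ ω, Xi ω = Filter.limsup (fun n => noise n ω) atTop)
    -- Assumption 1.3 (Łojasiewicz-type gradient inequality)
    (hLoj : ∀ Q : Set (EuclideanSpace ℝ (Fin d)), IsCompact Q → ∀ b ∈ f '' Q,
      ∃ δ μ M : ℝ, δ ∈ Set.Ioc (0 : ℝ) 1 ∧ μ ∈ Set.Ioc (1 : ℝ) 2 ∧ 1 ≤ M ∧
        ∀ x ∈ Q, |f x - b| ≤ δ → |f x - b| ≤ M * ‖gradient f x‖ ^ μ) :
    ∃ C₁ that : Ω → ℝ, (∀ ω, 1 ≤ C₁ ω) ∧ (∀ ω, 0 < that ω ∧ that ω < 1) ∧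
      ∀ ε : ℝ, 0 < ε → ∃ τ : Ω → ℕ,
        ∀ᵐ ω ∂P, ω ∈ Λ → ∀ n, τ ω < n →
          (∀ k, n ≤ k → k ≤ a n (that ω) →
            ‖θ k ω - θ n ω‖ ≤
              C₁ ω * (‖gradient f (θ n ω)‖ + γ n ^ (-r) * (Xi ω + ε))) ∧
          (∀ k, n ≤ k → k ≤ a n (that ω) →
            f (θ k ω) - f (θ n ω) ≤
              C₁ ω * (γ n ^ (-r) * ‖gradient f (θ n ω)‖ * (Xi ω + ε) +
                γ n ^ (-(2 * r)) * (Xi ω + ε) ^ 2)) ∧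
          (f (θ (a n (that ω)) ω) - f (θ n ω) +
              that ω * ‖gradient f (θ n ω)‖ ^ 2 / 2 ≤
            C₁ ω * (γ n ^ (-r) * ‖gradient f (θ n ω)‖ * (Xi ω + ε) +
              γ n ^ (-(2 * r)) * (Xi ω + ε) ^ 2)) ∧
          (2 * (f (θ (a n (that ω)) ω) - f (θ n ω)) +
              that ω * ‖gradient f (θ n ω)‖ ^ 2 / 2 +
              ‖gradient f (θ n ω)‖ * ‖θ (a n (that ω)) ω - θ n ω‖ ≤
            C₁ ω * (γ n ^ (-r) * ‖gradient f (θ n ω)‖ * (Xi ω + ε) +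
              γ n ^ (-(2 * r)) * (Xi ω + ε) ^ 2)) :=
  stochastic_gradient_local_estimates_general P f hfd hlip α hαpos θ ξ hrec hα0 γ hγ hαdiv a ha Λ hΛ
    r hr noise hnoise hA12 Xi hXi
end

section
/- Let {α_n}_{n≥0} be positive reals with lim_n α_n = 0, limsup_n |α_{n+1}^{−1} − α_n^{−1}| < ∞ and Σ_n α_n = ∞, and suppose there exists r ∈ (1,∞) such that Σ_n α_n² γ_n^{2r} < ∞, where γ_0 = 0 and γ_n = Σ_{i=0}^{n−1} α_i. Then there exists a real number s ∈ (0,1) such that Σ_{n=0}^∞ α_n^{1+s} γ_n^{r} < ∞. -/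
/-!
With `s = (r + 2) / (2r + 2)`, weighted AM–GM with weights `s` and `1 - s` bounds
`α^{1+s} γ^r` by `s · α² γ^{2r} + (1 - s) · α γ^{-2}`, since the exponents of `α` and `γ` in the
geometric mean are `2s + (1 - s) = 1 + s` and `2rs - 2(1 - s) = r`. The first series is summable
by hypothesis; the second is dominated by the telescoping series `2 ∑ (γ_n⁻¹ - γ_{n+1}⁻¹)`
as soon as `α_n ≤ γ_n`, i.e. `γ_{n+1} ≤ 2 γ_n`.
-/

open Filter

lemma Antitone.summable_sub_succ {u : ℕ → ℝ} (hu : Antitone u) (hbdd : BddBelow (Set.range u)) :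
    Summable (fun n => u n - u (n + 1)) := by
  obtain ⟨c, hc⟩ := hbdd
  refine summable_of_sum_range_le (c := u 0 - c) (fun n => sub_nonneg.2 (hu n.le_succ)) ?_
  intro n
  rw [Finset.sum_range_sub']
  linarith [hc ⟨n, rfl⟩]

lemma Monotone.summable_inv_sub_inv_succ {γ : ℕ → ℝ} (hmono : Monotone γ)
    (hγ : Tendsto γ atTop atTop) : Summable (fun n => (γ n)⁻¹ - (γ (n + 1))⁻¹) := by
  obtain ⟨N, hN⟩ := (hγ.eventually_gt_atTop 0).exists
  rw [← summable_nat_add_iff N]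
  have hpos : ∀ n, 0 < γ (n + N) := fun n => hN.trans_le (hmono (Nat.le_add_left N n))
  have hanti : Antitone (fun n => (γ (n + N))⁻¹) := fun m n hmn =>
    inv_anti₀ (hpos m) (hmono (Nat.add_le_add_right hmn N))
  have hbdd : BddBelow (Set.range fun n => (γ (n + N))⁻¹) :=
    ⟨0, by rintro _ ⟨n, rfl⟩; exact (inv_pos.2 (hpos n)).le⟩
  simpa only [Nat.add_right_comm _ 1 N] using hanti.summable_sub_succ hbdd

lemma summable_mul_rpow_neg_two_of_add_succ {α γ : ℕ → ℝ} (hαnn : ∀ n, 0 ≤ α n)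
    (hγsucc : ∀ n, γ (n + 1) = γ n + α n) (hα0 : Tendsto α atTop (nhds 0))
    (hγ : Tendsto γ atTop atTop) : Summable (fun n => α n * γ n ^ (-2 : ℝ)) := by
  have hmono : Monotone γ := monotone_nat_of_le_succ fun n => by linarith [hγsucc n, hαnn n]
  refine ((hmono.summable_inv_sub_inv_succ hγ).mul_left 2).of_norm_bounded_eventually_nat ?_
  filter_upwards [hγ.eventually_ge_atTop 1, hα0.eventually_le_const one_pos] with n hγ1 hα1
  have hγpos : 0 < γ n := one_pos.trans_le hγ1
  have hγsucc_pos : 0 < γ (n + 1) := hγpos.trans_le (hmono n.le_succ)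
  have hγsucc_le : γ (n + 1) ≤ 2 * γ n := by linarith [hγsucc n]
  have htel : (γ n)⁻¹ - (γ (n + 1))⁻¹ = α n / (γ n * γ (n + 1)) := by
    rw [inv_sub_inv hγpos.ne' hγsucc_pos.ne', hγsucc n]
    ring
  rw [Real.norm_of_nonneg (mul_nonneg (hαnn n) (Real.rpow_nonneg hγpos.le _)), htel, Real.rpow_neg hγpos.le, Real.rpow_two,
    ← div_eq_mul_inv, mul_div_assoc', div_le_div_iff₀ (by positivity) (by positivity)]
  have := mul_le_mul_of_nonneg_left hγsucc_le (mul_nonneg (hαnn n) hγpos.le)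
  nlinarith

lemma rpow_mul_rpow_le_weighted_add {a g s : ℝ} (ha : 0 < a) (hg : 0 < g) (hs0 : 0 ≤ s)
    (hs1 : s ≤ 1) (p q u v : ℝ) :
    a ^ (s * p + (1 - s) * q) * g ^ (s * u + (1 - s) * v)
      ≤ s * (a ^ p * g ^ u) + (1 - s) * (a ^ q * g ^ v) := by
  have hgm := Real.geom_mean_le_arith_mean2_weighted hs0 (sub_nonneg.2 hs1)
    (mul_pos (Real.rpow_pos_of_pos ha p) (Real.rpow_pos_of_pos hg u)).le
    (mul_pos (Real.rpow_pos_of_pos ha q) (Real.rpow_pos_of_pos hg v)).le (add_sub_cancel s 1)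
  convert hgm using 1
  rw [Real.mul_rpow (by positivity) (by positivity), Real.mul_rpow (by positivity) (by positivity),
    ← Real.rpow_mul ha.le, ← Real.rpow_mul ha.le, ← Real.rpow_mul hg.le, ← Real.rpow_mul hg.le,
    Real.rpow_add ha, Real.rpow_add hg]
  ring_nf

theorem stepsize_summability_general
    (α : ℕ → ℝ) (hαpos : ∀ n, 0 < α n)
    (γ : ℕ → ℝ) (hγ : ∀ n, γ n = ∑ i ∈ Finset.range n, α i)
    (hα0 : Tendsto α atTop (nhds 0))
    (hαdiv : Tendsto γ atTop atTop)
    (r : ℝ) (hr : 1 < r)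
    (hsum : Summable (fun n => α n ^ 2 * γ n ^ (2 * r))) :
    ∃ s ∈ Set.Ioo (0 : ℝ) 1, Summable (fun n => α n ^ (1 + s) * γ n ^ r) := by
  set s : ℝ := (r + 2) / (2 * r + 2) with hs_def
  have hs : s ∈ Set.Ioo (0 : ℝ) 1 :=
    ⟨by positivity, (div_lt_one (by linarith)).2 (by linarith)⟩
  refine ⟨s, hs, ?_⟩
  have hγsucc : ∀ n, γ (n + 1) = γ n + α n := fun n => by simp [hγ, Finset.sum_range_succ]
  have hinv := summable_mul_rpow_neg_two_of_add_succ (fun n => (hαpos n).le) hγsucc hα0 hαdiv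
  refine ((hsum.mul_left s).add (hinv.mul_left (1 - s))).of_norm_bounded_eventually_nat ?_
  filter_upwards [hαdiv.eventually_gt_atTop 0] with n hγn
  have hamgm := rpow_mul_rpow_le_weighted_add (hαpos n) hγn hs.1.le hs.2.le 2 1 (2 * r) (-2)
  rw [Real.rpow_two, Real.rpow_one] at hamgm
  rw [Real.norm_of_nonneg (mul_nonneg (Real.rpow_nonneg (hαpos n).le _) (Real.rpow_nonneg hγn.le _))]
  convert hamgm using 3
  · ring
  · rw [hs_def]; field_simp; ring

/-- Lemma 11.1 of the paper: if `{α_n}` are positive reals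
with `α_n → 0`, `limsup_n |α_{n+1}^{−1} − α_n^{−1}| < ∞`, `Σ α_n = ∞`, and
`Σ α_n² γ_n^{2r} < ∞` for some `r ∈ (1,∞)`, then there exists `s ∈ (0,1)` with
`Σ α_n^{1+s} γ_n^r < ∞`. -/
theorem stepsize_summability
    (α : ℕ → ℝ) (hαpos : ∀ n, 0 < α n)
    (γ : ℕ → ℝ) (hγ : ∀ n, γ n = ∑ i ∈ Finset.range n, α i)
    (hα0 : Tendsto α atTop (nhds 0))
    (hαdiff : IsBoundedUnder (· ≤ ·) atTop (fun n => |(α (n + 1))⁻¹ - (α n)⁻¹|))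
    (hαdiv : Tendsto γ atTop atTop)
    (r : ℝ) (hr : 1 < r)
    (hsum : Summable (fun n => α n ^ 2 * γ n ^ (2 * r))) :
    ∃ s ∈ Set.Ioo (0 : ℝ) 1, Summable (fun n => α n ^ (1 + s) * γ n ^ r) :=
  stepsize_summability_general α hαpos γ hγ hα0 hαdiv r hr hsum
end

section
/- Let f : ℝ^d → ℝ be continuously differentiable and S = {θ ∈ ℝ^d : ∇f(θ) = 0}. Suppose there exists an open set V ⊇ S such that for every compact Q ⊂ V and every a ∈ f(Q) there exist δ ∈ (0,1], μ ∈ (1,2], M ∈ [1,∞) with |f(θ) − a| ≤ M‖∇f(θ)‖^μ for all θ ∈ Q satisfying |f(θ) − a| ≤ δ. Then the same conclusion holds globally: for every compact Q ⊂ ℝ^d and every a ∈ f(Q) there exist δ̃ ∈ (0,1], μ̃ ∈ (1,2], M̃ ∈ [1,∞) such that |f(θ) − a| ≤ M̃‖∇f(θ)‖^{μ̃} for all θ ∈ Q with |f(θ) − a| ≤ δ̃. -/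
/-!
Since `∇f` is continuous, `S` is closed, so by normality there is an open `U ⊇ S` with
`closure U ⊆ V`. Split a compact `Q` into `Q ∩ closure U`, a compact subset of `V` where the
local inequality applies (or holds vacuously, when `f` stays away from `a` there), and `Q \ U`,
a compact set free of stationary points, on which `‖∇f‖` is bounded below by some `m > 0`.
On the latter `|f - a| ≤ δ ≤ 1 ≤ m^(-μ) ‖∇f‖^μ`, so enlarging `M` to `max M m^(-μ)` covers
both pieces.
-/

open Set

variable {E : Type*} [NormedAddCommGroup E] [InnerProductSpace ℝ E] [CompleteSpace E]

def LojasiewiczIneqOn (f : E → ℝ) (Q : Set E) (b : ℝ) : Prop :=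
  ∃ δ μ M : ℝ, δ ∈ Ioc (0 : ℝ) 1 ∧ μ ∈ Ioc (1 : ℝ) 2 ∧ 1 ≤ M ∧
    ∀ x ∈ Q, |f x - b| ≤ δ → |f x - b| ≤ M * ‖gradient f x‖ ^ μ

theorem ContDiff.continuous_gradient {f : E → ℝ} (hf : ContDiff ℝ 1 f) :
    Continuous (gradient f) :=
  (InnerProductSpace.toDual ℝ E).symm.continuous.comp (hf.continuous_fderiv one_ne_zero)

namespace LojasiewiczIneqOn

variable {f : E → ℝ} {P Q : Set E} {b : ℝ}

theorem mono (h : LojasiewiczIneqOn f Q b) (hPQ : P ⊆ Q) : LojasiewiczIneqOn f P b := by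
  obtain ⟨δ, μ, M, hδ, hμ, hM, hbound⟩ := h
  exact ⟨δ, μ, M, hδ, hμ, hM, fun x hx => hbound x (hPQ hx)⟩

theorem of_forall_ne (hQ : IsCompact Q) (hf : ContinuousOn f Q) (hb : ∀ x ∈ Q, f x ≠ b) :
    LojasiewiczIneqOn f Q b := by
  obtain ⟨δ₀, hδ₀, hδ₀le⟩ := hQ.exists_forall_le' (hf.sub continuousOn_const).abs
    (a := 0) fun x hx => abs_pos.mpr (sub_ne_zero.mpr (hb x hx))
  refine ⟨min 1 (δ₀ / 2), 2, 1, ⟨by positivity, min_le_left _ _⟩, ⟨one_lt_two, le_rfl⟩, le_rfl,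
    fun x hx hle => absurd hle (not_le.mpr ?_)⟩
  calc min 1 (δ₀ / 2) ≤ δ₀ / 2 := min_le_right _ _
    _ < δ₀ := half_lt_self hδ₀
    _ ≤ |f x - b| := hδ₀le x hx

theorem union_of_le_norm_gradient (h : LojasiewiczIneqOn f P b) {m : ℝ} (hm : 0 < m)
    (hQ : ∀ x ∈ Q, m ≤ ‖gradient f x‖) : LojasiewiczIneqOn f (P ∪ Q) b := by
  obtain ⟨δ, μ, M, hδ, hμ, hM, hbound⟩ := h
  have hmμ : 0 < m ^ μ := Real.rpow_pos_of_pos hm μ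
  refine ⟨δ, μ, max M (m ^ μ)⁻¹, hδ, hμ, hM.trans (le_max_left _ _), ?_⟩
  rintro x (hxP | hxQ) hle
  · calc |f x - b| ≤ M * ‖gradient f x‖ ^ μ := hbound x hxP hle
      _ ≤ max M (m ^ μ)⁻¹ * ‖gradient f x‖ ^ μ := by gcongr; exact le_max_left _ _
  · calc |f x - b| ≤ 1 := hle.trans hδ.2
      _ = (m ^ μ)⁻¹ * m ^ μ := (inv_mul_cancel₀ hmμ.ne').symm
      _ ≤ max M (m ^ μ)⁻¹ * ‖gradient f x‖ ^ μ := by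
          gcongr
          · exact le_max_right _ _
          · linarith [hμ.1]
          · exact hQ x hxQ

end LojasiewiczIneqOn

/-- Appendix of the paper, cf. Remark 1.2: if the
Łojasiewicz-type gradient inequality of Assumption 1.3 holds locally on an open
neighborhood `V` of the set `S` of stationary points of `f`, then it holds
globally, for every compact subset of `ℝ^d`. -/
theorem lojasiewicz_local_to_global
    {d : ℕ}
    (f : EuclideanSpace ℝ (Fin d) → ℝ) (hf : ContDiff ℝ 1 f)
    (S : Set (EuclideanSpace ℝ (Fin d)))
    (hS : S = {x | gradient f x = 0})
    (V : Set (EuclideanSpace ℝ (Fin d))) (hV : IsOpen V) (hSV : S ⊆ V)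
    (hloc : ∀ Q : Set (EuclideanSpace ℝ (Fin d)), IsCompact Q → Q ⊆ V →
      ∀ b ∈ f '' Q, ∃ δ μ M : ℝ,
        δ ∈ Set.Ioc (0 : ℝ) 1 ∧ μ ∈ Set.Ioc (1 : ℝ) 2 ∧ 1 ≤ M ∧
        ∀ x ∈ Q, |f x - b| ≤ δ → |f x - b| ≤ M * ‖gradient f x‖ ^ μ) :
    ∀ Q : Set (EuclideanSpace ℝ (Fin d)), IsCompact Q →
      ∀ b ∈ f '' Q, ∃ δ μ M : ℝ,
        δ ∈ Set.Ioc (0 : ℝ) 1 ∧ μ ∈ Set.Ioc (1 : ℝ) 2 ∧ 1 ≤ M ∧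
        ∀ x ∈ Q, |f x - b| ≤ δ → |f x - b| ≤ M * ‖gradient f x‖ ^ μ := by
  intro Q hQ b _
  have hgrad := hf.continuous_gradient
  have hSclosed : IsClosed S := hS ▸ isClosed_eq hgrad continuous_const
  obtain ⟨U, hU, hSU, hUV⟩ := normal_exists_closure_subset hSclosed hV hSV
  have hnear : LojasiewiczIneqOn f (Q ∩ closure U) b := by
    have hcompact : IsCompact (Q ∩ closure U) := hQ.inter_right isClosed_closure
    by_cases hb : b ∈ f '' (Q ∩ closure U)
    · exact hloc _ hcompact (inter_subset_right.trans hUV) b hb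
    · exact .of_forall_ne hcompact hf.continuous.continuousOn fun x hx hfx => hb ⟨x, hx, hfx⟩
  obtain ⟨m, hm, hfar⟩ := (hQ.diff hU).exists_forall_le' (a := 0)
    (continuous_norm.comp hgrad).continuousOn fun x hx =>
      norm_pos_iff.mpr fun h0 => hx.2 (hSU (hS ▸ h0))
  exact (hnear.union_of_le_norm_gradient hm hfar).mono fun x hx =>
    (em (x ∈ U)).imp (fun hxU => ⟨hx, subset_closure hxU⟩) (fun hxU => ⟨hx, hxU⟩)
end
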